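/- Let T > 0, C > 0, a ≥ 0, and let f, g : [0,T] → [0,∞) be Lebesgue integrable functions such that f(t) ≤ a·g(t) + C·∫_0^t g(s) ds for every t ∈ [0,T]. Then ∫_0^T e^{−2Ct} f(t) dt ≤ ( a + 1/2 ) · ∫_0^T e^{−2Ct} g(t) dt. -/

import Mathlib

/-!
Write `G t = ∫_0^t g`. Multiplying the hypothesis by the weight `e^{-2Ct}` and integrating,
it suffices to show `C ∫_0^T e^{-2Ct} G(t) dt ≤ ½ ∫_0^T e^{-2Ct} g(t) dt`. Integrating by parts
against `d/dt e^{-2Ct} = -2C e^{-2Ct}` (valid since `G` is absolutely continuous with `G' = g` a.e.)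
gives `2C ∫_0^T e^{-2Ct} G = ∫_0^T e^{-2Ct} g - e^{-2CT} G(T)`, and `G(T) ≥ 0`.
-/

open MeasureTheory Set

theorem AbsolutelyContinuousOnInterval.integral_primitive_mul_deriv {g v : ℝ → ℝ} {a b : ℝ}
    (hg : IntervalIntegrable g volume a b) (hv : AbsolutelyContinuousOnInterval v a b) :
    ∫ x in a..b, (∫ t in a..x, g t) * deriv v x =
      (∫ t in a..b, g t) * v b - ∫ x in a..b, g x * v x := by
  have hG := hg.absolutelyContinuousOnInterval_intervalIntegral left_mem_uIcc
  rw [hG.integral_mul_deriv_eq_deriv_mul hv, intervalIntegral.integral_same, zero_mul, sub_zero]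
  congr 1
  apply intervalIntegral.integral_congr_ae
  filter_upwards [hg.ae_hasDerivAt_integral] with x hx hxab
  rw [(hx (uIoc_subset_uIcc hxab) a left_mem_uIcc).deriv]

theorem two_mul_integral_exp_mul_primitive {g : ℝ → ℝ} {a b : ℝ}
    (hg : IntervalIntegrable g volume a b) (C : ℝ) :
    2 * C * ∫ t in a..b, Real.exp (-2 * C * t) * ∫ s in a..t, g s =
      (∫ t in a..b, Real.exp (-2 * C * t) * g t) - Real.exp (-2 * C * b) * ∫ s in a..b, g s := by
  have hw : ContDiff ℝ 1 fun t ↦ Real.exp (-2 * C * t) := by fun_prop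
  have hderiv :
      deriv (fun t ↦ Real.exp (-2 * C * t)) = fun t ↦ -2 * C * Real.exp (-2 * C * t) := by
    ext t
    simp [mul_comm]
  have hparts := hw.contDiffOn.absolutelyContinuousOnInterval.integral_primitive_mul_deriv hg
  calc 2 * C * ∫ t in a..b, Real.exp (-2 * C * t) * ∫ s in a..t, g s
      = -∫ t in a..b, (∫ s in a..t, g s) * deriv (fun t ↦ Real.exp (-2 * C * t)) t := by
        rw [hderiv, ← intervalIntegral.integral_const_mul, ← intervalIntegral.integral_neg]
        congr 1
        ext t
        ring
    _ = _ := by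
        rw [hparts]
        simp_rw [mul_comm (g _)]
        ring

theorem mul_integral_exp_mul_primitive_le {g : ℝ → ℝ} {a b : ℝ}
    (hg : IntervalIntegrable g volume a b) (hg_nonneg : 0 ≤ ∫ s in a..b, g s) (C : ℝ) :
    C * ∫ t in a..b, Real.exp (-2 * C * t) * ∫ s in a..t, g s ≤
      1 / 2 * ∫ t in a..b, Real.exp (-2 * C * t) * g t := by
  have := two_mul_integral_exp_mul_primitive hg C
  linarith [mul_nonneg (Real.exp_pos (-2 * C * b)).le hg_nonneg]

theorem weighted_norm_contraction_estimate_general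
    (T : ℝ) (hT : 0 < T) (C : ℝ) (a : ℝ)
    (f g : ℝ → ℝ) (hg0 : ∀ t, 0 ≤ g t)
    (hfint : IntegrableOn f (Set.Icc 0 T)) (hgint : IntegrableOn g (Set.Icc 0 T))
    (hfg : ∀ t ∈ Set.Icc (0 : ℝ) T, f t ≤ a * g t + C * ∫ s in (0 : ℝ)..t, g s) :
    ∫ t in (0 : ℝ)..T, Real.exp (-2 * C * t) * f t ≤
      (a + 1 / 2) * ∫ t in (0 : ℝ)..T, Real.exp (-2 * C * t) * g t := by
  have hg : IntervalIntegrable g volume 0 T :=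
    (intervalIntegrable_iff_integrableOn_Icc_of_le hT.le).2 hgint
  have hf : IntervalIntegrable f volume 0 T :=
    (intervalIntegrable_iff_integrableOn_Icc_of_le hT.le).2 hfint
  have hw : ContinuousOn (fun t ↦ Real.exp (-2 * C * t)) (uIcc 0 T) := by fun_prop
  have hG := (hg.absolutelyContinuousOnInterval_intervalIntegral left_mem_uIcc).continuousOn
  have hwg := hg.continuousOn_mul hw
  have hwG := (hG.intervalIntegrable (μ := volume)).continuousOn_mul hw
  calc ∫ t in (0 : ℝ)..T, Real.exp (-2 * C * t) * f t
      ≤ ∫ t in (0 : ℝ)..T, a * (Real.exp (-2 * C * t) * g t) +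
          C * (Real.exp (-2 * C * t) * ∫ s in (0 : ℝ)..t, g s) := by
        refine intervalIntegral.integral_mono_on hT.le (hf.continuousOn_mul hw)
          ((hwg.const_mul a).add (hwG.const_mul C)) fun t ht ↦ ?_
        have := mul_le_mul_of_nonneg_left (hfg t ht) (Real.exp_pos (-2 * C * t)).le
        linarith
    _ = a * (∫ t in (0 : ℝ)..T, Real.exp (-2 * C * t) * g t) +
          C * ∫ t in (0 : ℝ)..T, Real.exp (-2 * C * t) * ∫ s in (0 : ℝ)..t, g s := by
        rw [intervalIntegral.integral_add (hwg.const_mul a) (hwG.const_mul C),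
          intervalIntegral.integral_const_mul, intervalIntegral.integral_const_mul]
    _ ≤ (a + 1 / 2) * ∫ t in (0 : ℝ)..T, Real.exp (-2 * C * t) * g t := by
        have := mul_integral_exp_mul_primitive_le hg
          (intervalIntegral.integral_nonneg hT.le fun t _ ↦ hg0 t) C
        linarith

/-- Abstract form of the weighted-norm contraction estimate (3.13)–(3.14): if
`f(t) ≤ a g(t) + C ∫_0^t g(s) ds` on `[0,T]`, then
`∫_0^T e^{−2Ct} f(t) dt ≤ (a + 1/2) ∫_0^T e^{−2Ct} g(t) dt`. -/
theorem weighted_norm_contraction_estimate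
    (T : ℝ) (hT : 0 < T) (C : ℝ) (hC : 0 < C) (a : ℝ) (ha : 0 ≤ a)
    (f g : ℝ → ℝ) (hf0 : ∀ t, 0 ≤ f t) (hg0 : ∀ t, 0 ≤ g t)
    (hfint : IntegrableOn f (Set.Icc 0 T)) (hgint : IntegrableOn g (Set.Icc 0 T))
    (hfg : ∀ t ∈ Set.Icc (0 : ℝ) T, f t ≤ a * g t + C * ∫ s in (0 : ℝ)..t, g s) :
    ∫ t in (0 : ℝ)..T, Real.exp (-2 * C * t) * f t ≤
      (a + 1 / 2) * ∫ t in (0 : ℝ)..T, Real.exp (-2 * C * t) * g t :=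
  weighted_norm_contraction_estimate_general T hT C a f g hg0 hfint hgint hfg
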